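/- arXiv:1301.0140 — 5 statements merged into one kernel-verified Lean document; each statement's English description precedes it below -/
import Mathlib

section
/- Let ⊙ be a pseudo-multiplication on [0,∞] and let ν, τ be σ-maxitive measures on a measurable space (E, 𝔅). Assume that ν is semi-⊙-finite and that there exists a measurable c : E → [0,∞] with ν(B) = ∫_B c ⊙ dτ for all measurable B. Then there exists a measurable c₁ : E → [0,∞] taking only ⊙-finite values such that ν(B) = ∫_B c₁ ⊙ dτ for all measurable B. -/
open scoped ENNReal
open Set

/-- A pseudo-multiplication on `[0,∞]`: associative, monotone in each argument,
continuous on `(0,∞) × [0,∞]`, with `s ↦ s ⊙ t` continuous on `(0,∞]`,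
admitting a left identity, without zero divisors, and with `0` as annihilator. -/
structure PseudoMul where
  op : ℝ≥0∞ → ℝ≥0∞ → ℝ≥0∞
  assoc : ∀ a b c, op (op a b) c = op a (op b c)
  mono_left : ∀ t, Monotone fun s => op s t
  mono_right : ∀ s, Monotone fun t => op s t
  continuousOn : ContinuousOn (fun p : ℝ≥0∞ × ℝ≥0∞ => op p.1 p.2) (Ioo 0 ⊤ ×ˢ univ)
  continuousOn_left : ∀ t, ContinuousOn (fun s => op s t) (Ioi 0)
  one : ℝ≥0∞
  one_op : ∀ t, op one t = t
  no_zero_divisors : ∀ s t, op s t = 0 → s = 0 ∨ t = 0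
  zero_op : ∀ t, op 0 t = 0
  op_zero : ∀ t, op t 0 = 0

/-- An element `t` is `⊙`-finite if `⨅_{s>0} s ⊙ t = 0`. -/
def PseudoMul.OFinite (P : PseudoMul) (t : ℝ≥0∞) : Prop :=
  ⨅ s ∈ Ioi (0 : ℝ≥0∞), P.op s t = 0

/-- `⊙` is non-degenerate if its left identity is `⊙`-finite. -/
def PseudoMul.Nondegenerate (P : PseudoMul) : Prop :=
  P.OFinite P.one

/-- A σ-maxitive measure: vanishes on `∅` and turns countable unions of
measurable sets into suprema. -/
def SigmaMaxitive {E : Type*} [MeasurableSpace E] (ν : Set E → ℝ≥0∞) : Prop :=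
  ν ∅ = 0 ∧ ∀ B : ℕ → Set E, (∀ n, MeasurableSet (B n)) →
    ν (⋃ n, B n) = ⨆ n, ν (B n)

/-- The idempotent `⊙`-integral `∫_B f ⊙ dν = ⨆_{t ∈ [0,∞)} t ⊙ ν(B ∩ {f > t})`. -/
noncomputable def idemInt {E : Type*} [MeasurableSpace E] (P : PseudoMul) (ν : Set E → ℝ≥0∞)
    (f : E → ℝ≥0∞) (B : Set E) : ℝ≥0∞ :=
  ⨆ t ∈ Iio (⊤ : ℝ≥0∞), P.op t (ν (B ∩ {x | t < f x}))

/-- `ν` is semi-`⊙`-finite if `ν(B)` is the supremum of `ν(A)` over measurable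
`A ⊆ B` with `ν(A)` `⊙`-finite, for every measurable `B`. -/
def SemiOFinite {E : Type*} [MeasurableSpace E] (P : PseudoMul)
    (ν : Set E → ℝ≥0∞) : Prop :=
  ∀ B : Set E, MeasurableSet B →
    ν B = ⨆ A ∈ {A : Set E | MeasurableSet A ∧ A ⊆ B ∧ P.OFinite (ν A)}, ν A

/-!
Replace `c` by `0` on `N = {x | c x is not ⊙-finite}`. This does not change `∫_A c ⊙ dτ` when
`τ (A ∩ N) = 0`, and by semi-`⊙`-finiteness `ν` is determined by its values on sets `A` with
`ν A` `⊙`-finite. For such `A`, if `τ (A ∩ N) > 0`, then some `S ⊆ A` with `τ S > γ > 0` has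
`ε < s ⊙ c` on `S` for all `s > 0`; continuity of `⊙` moves this to a rational level `q < c`,
so that `ε ⊙ γ ≤ (s ⊙ q) ⊙ τ (A ∩ {q < c}) ≤ s ⊙ ν A` for all `s > 0`, contradicting
`⨅_{s>0} s ⊙ ν A = 0` since `⊙` has no zero divisors.
-/

open Filter Topology

namespace PseudoMul

variable (P : PseudoMul)

noncomputable def infOp (t : ℝ≥0∞) : ℝ≥0∞ :=
  ⨅ s ∈ Ioi (0 : ℝ≥0∞), P.op s t

theorem oFinite_iff_infOp_eq_zero {t : ℝ≥0∞} : P.OFinite t ↔ P.infOp t = 0 :=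
  Iff.rfl

theorem op_le_op {a b c d : ℝ≥0∞} (hab : a ≤ b) (hcd : c ≤ d) : P.op a c ≤ P.op b d :=
  (P.mono_left c hab).trans (P.mono_right b hcd)

theorem infOp_le {s : ℝ≥0∞} (hs : 0 < s) (t : ℝ≥0∞) : P.infOp t ≤ P.op s t :=
  biInf_le (fun s => P.op s t) hs

theorem le_infOp {a t : ℝ≥0∞} (h : ∀ s, 0 < s → s < ⊤ → a ≤ P.op s t) : a ≤ P.infOp t := by
  refine le_iInf₂ fun s (hs : 0 < s) => ?_
  rcases eq_top_or_lt_top s with rfl | hs'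
  · exact (h 1 one_pos ENNReal.one_lt_top).trans (P.mono_left t le_top)
  · exact h s hs hs'

theorem infOp_eq_iInf_nat (t : ℝ≥0∞) : P.infOp t = ⨅ n : ℕ, P.op (n : ℝ≥0∞)⁻¹ t := by
  refine le_antisymm (le_iInf fun n => P.infOp_le (by simp) t) (le_iInf₂ fun s hs => ?_)
  obtain ⟨n, hn⟩ := ENNReal.exists_inv_nat_lt (ne_of_gt hs)
  exact (iInf_le _ n).trans (P.mono_left t hn.le)

theorem measurable_infOp : Measurable P.infOp := by
  simp_rw [funext P.infOp_eq_iInf_nat]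
  exact Measurable.iInf fun n => (P.mono_right _).measurable

theorem oFinite_zero : P.OFinite 0 :=
  nonpos_iff_eq_zero.1 ((P.infOp_le one_pos 0).trans_eq (P.op_zero 1))

theorem exists_lt_lt_op {s u b : ℝ≥0∞} (hs0 : 0 < s) (hs : s < ⊤) (hb : b < P.op s u) :
    ∃ t < u, b < P.op s t := by
  have hu : u ≠ 0 := by
    rintro rfl
    simp [P.op_zero] at hb
  have hcont : ContinuousAt (P.op s) u :=
    (P.continuousOn.continuousAt (prod_mem_nhds (Ioo_mem_nhds hs0 hs) univ_mem)).comp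
      (Continuous.prodMk_right s).continuousAt
  have : (𝓝[<] u).NeBot := nhdsLT_neBot_of_exists_lt ⟨0, pos_iff_ne_zero.2 hu⟩
  obtain ⟨t, hbt, htu : t < u⟩ :=
    ((hcont.tendsto.mono_left nhdsWithin_le_nhds).eventually (lt_mem_nhds hb)).and
      (self_mem_nhdsWithin : Iio u ∈ 𝓝[<] u) |>.exists
  exact ⟨t, htu, hbt⟩

end PseudoMul

namespace SigmaMaxitive

variable {E : Type*} [MeasurableSpace E] {ν : Set E → ℝ≥0∞}

theorem iUnion {ι : Type*} [Countable ι] [Nonempty ι] (hν : SigmaMaxitive ν) {B : ι → Set E}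
    (hB : ∀ i, MeasurableSet (B i)) : ν (⋃ i, B i) = ⨆ i, ν (B i) := by
  obtain ⟨f, hf⟩ := exists_surjective_nat ι
  rw [← hf.iUnion_comp, ← hf.iSup_comp]
  exact hν.2 _ fun n => hB (f n)

theorem union (hν : SigmaMaxitive ν) {A B : Set E} (hA : MeasurableSet A)
    (hB : MeasurableSet B) : ν (A ∪ B) = ν A ⊔ ν B := by
  rw [union_eq_iUnion, sup_eq_iSup, hν.iUnion fun b => by cases b <;> assumption]
  simp only [Bool.apply_cond ν]

theorem mono (hν : SigmaMaxitive ν) {A B : Set E} (hA : MeasurableSet A) (hB : MeasurableSet B)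
    (hAB : A ⊆ B) : ν A ≤ ν B := by
  rw [← union_eq_self_of_subset_left hAB, hν.union hA hB]
  exact le_sup_left

theorem apply_diff_of_null (hν : SigmaMaxitive ν) {C M : Set E} (hC : MeasurableSet C)
    (hM : MeasurableSet M) (hnull : ν (C ∩ M) = 0) : ν (C \ M) = ν C := by
  conv_rhs => rw [← sdiff_union_inter C M, hν.union (hC.diff hM) (hC.inter hM), hnull]
  exact (sup_bot_eq _).symm

end SigmaMaxitive

section IdemInt

variable {E : Type*} [MeasurableSpace E] (P : PseudoMul) {τ : Set E → ℝ≥0∞} {f : E → ℝ≥0∞}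

theorem op_le_idemInt {t : ℝ≥0∞} (ht : t < ⊤) (B : Set E) :
    P.op t (τ (B ∩ {x | t < f x})) ≤ idemInt P τ f B :=
  le_iSup₂ (f := fun t (_ : t ∈ Iio ⊤) => P.op t (τ (B ∩ {x | t < f x}))) t ht

theorem idemInt_indicator (M B : Set E) :
    idemInt P τ (M.indicator f) B = idemInt P τ f (B ∩ M) := by
  refine iSup_congr fun t => iSup_congr fun _ => ?_
  congr 2
  ext x
  by_cases hx : x ∈ M <;> simp [hx]

variable {P}

theorem idemInt_diff_of_null (hτ : SigmaMaxitive τ) (hf : Measurable f) {B M : Set E}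
    (hB : MeasurableSet B) (hM : MeasurableSet M) (hnull : τ (B ∩ M) = 0) :
    idemInt P τ f (B \ M) = idemInt P τ f B := by
  refine iSup_congr fun t => iSup_congr fun _ => congrArg (P.op t) ?_
  have hL : MeasurableSet (B ∩ {x | t < f x}) := hB.inter (measurableSet_lt measurable_const hf)
  rw [← inter_sdiff_right_comm]
  refine hτ.apply_diff_of_null hL hM (nonpos_iff_eq_zero.1 ?_)
  calc τ (B ∩ {x | t < f x} ∩ M) ≤ τ (B ∩ M) :=
        hτ.mono (hL.inter hM) (hB.inter hM) (inter_subset_inter_left M inter_subset_left)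
    _ = 0 := hnull

theorem op_le_op_idemInt (hτ : SigmaMaxitive τ) {c : E → ℝ≥0∞} (hc : Measurable c)
    {A S : Set E} (hA : MeasurableSet A) (hS : MeasurableSet S) (hSA : S ⊆ A)
    {s ε γ : ℝ≥0∞} (hs0 : 0 < s) (hs : s < ⊤) (hε : ∀ x ∈ S, ε < P.op s (c x))
    (hγ : γ < τ S) : P.op ε γ ≤ P.op s (idemInt P τ c A) := by
  let r : ℚ → ℝ≥0∞ := fun q => ((q : ℝ).toNNReal : ℝ≥0∞)
  -- by left-continuity of `s ⊙ ·`, the levels `q` with `ε < s ⊙ q` already cover `S`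
  let C : ℚ → Set E := fun q => S ∩ ({_x | ε < P.op s (r q)} ∩ {x | r q < c x})
  have hC : ∀ q, MeasurableSet (C q) := fun q =>
    hS.inter ((MeasurableSet.const _).inter (measurableSet_lt measurable_const hc))
  have hcover : ⋃ q, C q = S := by
    refine (iUnion_subset fun q => inter_subset_left).antisymm fun x hx => ?_
    obtain ⟨t, htc, hεt⟩ := P.exists_lt_lt_op hs0 hs (hε x hx)
    obtain ⟨q, -, htq, hqc⟩ := ENNReal.lt_iff_exists_rat_btwn.1 htc
    exact mem_iUnion.2 ⟨q, hx, hεt.trans_le (P.mono_right s htq.le), hqc⟩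
  obtain ⟨q, hq⟩ : ∃ q, γ < τ (C q) := by
    rw [← lt_iSup_iff, ← hτ.iUnion hC, hcover]
    exact hγ
  obtain ⟨x, -, hεq : ε < P.op s (r q), -⟩ : (C q).Nonempty :=
    nonempty_iff_ne_empty.2 fun h => by simp [h, hτ.1] at hq
  have hCA : C q ⊆ A ∩ {x | r q < c x} := fun x hx => ⟨hSA hx.1, hx.2.2⟩
  calc P.op ε γ ≤ P.op (P.op s (r q)) (τ (A ∩ {x | r q < c x})) :=
        P.op_le_op hεq.le
          (hq.le.trans (hτ.mono (hC q) (hA.inter (measurableSet_lt measurable_const hc)) hCA))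
    _ = P.op s (P.op (r q) (τ (A ∩ {x | r q < c x}))) := P.assoc _ _ _
    _ ≤ P.op s (idemInt P τ c A) := P.mono_right s (op_le_idemInt P ENNReal.coe_lt_top A)

theorem null_of_oFinite_idemInt (hτ : SigmaMaxitive τ) {c : E → ℝ≥0∞} (hc : Measurable c)
    {A : Set E} (hA : MeasurableSet A) (hfin : P.OFinite (idemInt P τ c A)) :
    τ (A ∩ {x | ¬ P.OFinite (c x)}) = 0 := by
  by_contra hpos
  let S : ℕ → Set E := fun n => A ∩ {x | (n : ℝ≥0∞)⁻¹ < P.infOp (c x)}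
  have hS : ∀ n, MeasurableSet (S n) := fun n =>
    hA.inter (measurableSet_lt measurable_const (P.measurable_infOp.comp hc))
  have hcover : ⋃ n, S n = A ∩ {x | ¬ P.OFinite (c x)} := by
    ext x
    simp only [S, mem_iUnion, mem_inter_iff, mem_ofPred_eq, P.oFinite_iff_infOp_eq_zero,
      exists_and_left]
    exact and_congr_right fun _ =>
      ⟨fun ⟨_, hn⟩ => (pos_of_gt hn).ne', ENNReal.exists_inv_nat_lt⟩
  obtain ⟨n, hn⟩ : ∃ n, 0 < τ (S n) := by
    rw [← lt_iSup_iff, ← hτ.2 S hS, hcover]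
    exact pos_iff_ne_zero.2 hpos
  obtain ⟨ε, hε0, hεn⟩ := exists_between (ENNReal.inv_pos.2 (ENNReal.natCast_ne_top n))
  obtain ⟨γ, hγ0, hγ⟩ := exists_between hn
  have hle : P.op ε γ ≤ P.infOp (idemInt P τ c A) := P.le_infOp fun s hs0 hs =>
    op_le_op_idemInt hτ hc hA (hS n) inter_subset_left hs0 hs
      (fun x hx => hεn.trans (hx.2.trans_le (P.infOp_le hs0 _))) hγ
  rcases P.no_zero_divisors _ _ (nonpos_iff_eq_zero.1 (hle.trans_eq hfin)) with h | h
  exacts [hε0.ne' h, hγ0.ne' h]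

end IdemInt

/-- A semi-`⊙`-finite σ-maxitive measure with a density admits a
`⊙`-finite-valued density. -/
theorem exists_ofinite_valued_density {E : Type*} [MeasurableSpace E]
    (P : PseudoMul) (ν τ : Set E → ℝ≥0∞)
    (hν : SigmaMaxitive ν) (hτ : SigmaMaxitive τ) (hsemi : SemiOFinite P ν)
    (c : E → ℝ≥0∞) (hc : Measurable c)
    (hdens : ∀ B : Set E, MeasurableSet B → ν B = idemInt P τ c B) :
    ∃ c₁ : E → ℝ≥0∞, Measurable c₁ ∧ (∀ x, P.OFinite (c₁ x)) ∧
      ∀ B : Set E, MeasurableSet B → ν B = idemInt P τ c₁ B := by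
  set N := {x | ¬ P.OFinite (c x)}
  have hN : MeasurableSet N :=
    (P.measurable_infOp.comp hc (measurableSet_singleton 0)).compl
  refine ⟨Nᶜ.indicator c, hc.indicator hN.compl, fun x => ?_, fun B hB => ?_⟩
  · by_cases hx : x ∈ Nᶜ
    · simpa [indicator_of_mem hx, N] using hx
    · simpa [indicator_of_notMem hx] using P.oFinite_zero
  have hdiff : ∀ A, MeasurableSet A → P.OFinite (ν A) → ν (A \ N) = ν A := fun A hA hfin => by
    rw [hdens A hA] at hfin ⊢
    rw [hdens _ (hA.diff hN)]
    exact idemInt_diff_of_null hτ hc hA hN (null_of_oFinite_idemInt hτ hc hA hfin)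
  have hνB : ν B = ν (B \ N) := by
    refine le_antisymm ?_ (hν.mono (hB.diff hN) hB sdiff_subset)
    rw [hsemi B hB]
    refine iSup₂_le fun A ⟨hA, hAB, hfin⟩ => ?_
    rw [← hdiff A hA hfin]
    exact hν.mono (hA.diff hN) (hB.diff hN) (sdiff_subset_sdiff_left hAB)
  rw [hνB, hdens _ (hB.diff hN), idemInt_indicator, sdiff_eq]
end

section
/- Let τ be a σ-maxitive measure on a measurable space (E, 𝔅). Then τ is σ-principal if and only if τ satisfies the countable chain condition, i.e., every family of pairwise disjoint measurable sets, each of strictly positive τ-measure, is countable. -/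
open scoped ENNReal
open Set

/-- A σ-ideal of the σ-algebra: a nonempty collection of measurable sets closed
under countable unions and under measurable subsets. -/
def IsSigmaIdeal {E : Type*} [MeasurableSpace E] (I : Set (Set E)) : Prop :=
  I.Nonempty ∧ (∀ A ∈ I, MeasurableSet A) ∧
    (∀ B : ℕ → Set E, (∀ n, B n ∈ I) → (⋃ n, B n) ∈ I) ∧
    (∀ A B : Set E, B ∈ I → A ⊆ B → MeasurableSet A → A ∈ I)

/-- `τ` is σ-principal. -/
def SigmaPrincipal {E : Type*} [MeasurableSpace E] (τ : Set E → ℝ≥0∞) : Prop :=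
  ∀ I : Set (Set E), IsSigmaIdeal I → ∃ L ∈ I, ∀ S ∈ I, τ (S \ L) = 0

/-- A σ-maxitive measure is σ-principal iff it satisfies the countable chain
condition. -/
theorem sigmaPrincipal_iff_ccc {E : Type*} [MeasurableSpace E]
    (τ : Set E → ℝ≥0∞) (hτ : SigmaMaxitive τ) :
    SigmaPrincipal τ ↔
      ∀ 𝒜 : Set (Set E), (∀ A ∈ 𝒜, MeasurableSet A) → (∀ A ∈ 𝒜, 0 < τ A) →
        𝒜.Pairwise Disjoint → 𝒜.Countable := by
  constructor
  · -- σ-principal → ccc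
    intro hP 𝒜 hmeas hpos hdisj
    set I : Set (Set E) :=
      {A | MeasurableSet A ∧ ∃ C, C ⊆ 𝒜 ∧ C.Countable ∧ A ⊆ ⋃₀ C} with hIdef
    have hideal : IsSigmaIdeal I := by
      refine ⟨⟨∅, MeasurableSet.empty, ∅, empty_subset _, countable_empty, by simp⟩,
        fun A hA => hA.1, ?_, ?_⟩
      · intro B hB
        choose hm C hC1 hC2 hC3 using hB
        refine ⟨MeasurableSet.iUnion hm, ⋃ n, C n, iUnion_subset hC1,
          countable_iUnion hC2, iUnion_subset fun n => (hC3 n).trans ?_⟩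
        exact sUnion_mono (subset_iUnion C n)
      · intro A B hB hAB hAmeas
        exact ⟨hAmeas, hB.2.choose, hB.2.choose_spec.1, hB.2.choose_spec.2.1,
          hAB.trans hB.2.choose_spec.2.2⟩
    obtain ⟨L, hL, hL0⟩ := hP I hideal
    obtain ⟨hLmeas, C₀, hC₀A, hC₀c, hLsub⟩ := hL
    have h𝒜 : 𝒜 ⊆ C₀ := by
      intro A hA
      by_contra hAC
      have hAI : A ∈ I :=
        ⟨hmeas A hA, {A}, singleton_subset_iff.2 hA, countable_singleton A, by simp⟩
      have hAL : A ∩ L = ∅ := by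
        apply eq_empty_of_subset_empty
        intro x ⟨hxA, hxL⟩
        obtain ⟨B, hB, hxB⟩ := hLsub hxL
        have : A ≠ B := fun h => hAC (h ▸ hB)
        exact (hdisj hA (hC₀A hB) this).le_bot ⟨hxA, hxB⟩
      have hdA : A \ L = A := by
        ext x
        constructor
        · exact fun h => h.1
        · exact fun hx => ⟨hx, fun hxL => eq_empty_iff_forall_notMem.1 hAL x ⟨hx, hxL⟩⟩
      have := hL0 A hAI
      rw [hdA] at this
      exact absurd this (hpos A hA).ne'
    exact hC₀c.mono h𝒜
  · -- ccc → σ-principal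
    intro hccc I hI
    obtain ⟨hne, hmeasI, hUnion, hsub⟩ := hI
    have hempty : ∅ ∈ I := by
      obtain ⟨A, hA⟩ := hne
      exact hsub ∅ A hA (empty_subset A) MeasurableSet.empty
    set 𝒮 : Set (Set (Set E)) :=
      {𝒜 | (∀ A ∈ 𝒜, A ∈ I ∧ 0 < τ A) ∧ 𝒜.Pairwise Disjoint} with h𝒮
    obtain ⟨𝒜, hmax⟩ : ∃ m, Maximal (· ∈ 𝒮) m := by
      apply zorn_subset
      intro c hc hchain
      refine ⟨⋃₀ c, ⟨?_, ?_⟩, fun s hs => subset_sUnion_of_mem hs⟩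
      · rintro A ⟨t, ht, hAt⟩
        exact (hc ht).1 A hAt
      · intro A hA B hB hAB
        obtain ⟨t, ht, hAt⟩ := hA
        obtain ⟨u, hu, hBu⟩ := hB
        rcases hchain.total ht hu with h | h
        · exact (hc hu).2 (h hAt) hBu hAB
        · exact (hc ht).2 hAt (h hBu) hAB
    have h𝒜S := hmax.prop
    have h𝒜cnt : 𝒜.Countable :=
      hccc 𝒜 (fun A hA => hmeasI A (h𝒜S.1 A hA).1) (fun A hA => (h𝒜S.1 A hA).2) h𝒜S.2
    have hLI : ⋃₀ 𝒜 ∈ I := by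
      rcases eq_empty_or_nonempty 𝒜 with h | h
      · simpa [h] using hempty
      · obtain ⟨f, hf⟩ := h𝒜cnt.exists_eq_range h
        rw [hf, sUnion_range]
        exact hUnion f fun n => (h𝒜S.1 (f n) (hf ▸ mem_range_self n)).1
    refine ⟨⋃₀ 𝒜, hLI, fun S hS => ?_⟩
    by_contra h0
    have hpos : 0 < τ (S \ ⋃₀ 𝒜) := pos_iff_ne_zero.2 h0
    have hSdI : S \ ⋃₀ 𝒜 ∈ I :=
      hsub _ S hS diff_subset ((hmeasI S hS).diff (hmeasI _ hLI))
    have hins : insert (S \ ⋃₀ 𝒜) 𝒜 ∈ 𝒮 := by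
      constructor
      · rintro A (rfl | hA)
        · exact ⟨hSdI, hpos⟩
        · exact h𝒜S.1 A hA
      · refine h𝒜S.2.insert fun B hB _ => ?_
        have : Disjoint (S \ ⋃₀ 𝒜) B :=
          disjoint_sdiff_self_left.mono_right (subset_sUnion_of_mem hB)
        exact ⟨this, this.symm⟩
    have hmem : S \ ⋃₀ 𝒜 ∈ 𝒜 := hmax.2 hins (subset_insert _ _) (mem_insert _ _)
    have : S \ ⋃₀ 𝒜 = ∅ :=
      eq_empty_of_subset_empty fun x ⟨hxS, hxU⟩ => hxU ⟨_, hmem, hxS, hxU⟩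
    rw [this, hτ.1] at hpos
    exact lt_irrefl 0 hpos
end

section
/- Let (E, 𝔅) be a measurable space and let (𝓙_t)_{t>0} be a family of σ-ideals of 𝔅 that is nondecreasing in t (i.e., 𝓙_s ⊆ 𝓙_t whenever 0 < s ≤ t). Define ν(B) = ⨅{t ∈ (0,∞) : B ∈ 𝓙_t} for measurable B (with the infimum of the empty set equal to ∞). Then ν is a σ-maxitive measure on 𝔅: ν(∅) = 0 and ν(⋃ₙ Bₙ) = ⨆ₙ ν(Bₙ) for every countable family (Bₙ) of measurable sets. -/
open scoped ENNReal
open Set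

/-!
If every `B n` lies in `𝓙_u` for some `u < t`, then by monotonicity all of them lie in `𝓙_t`,
hence so does their union. Applied to every `t > ⨆ n, ν (B n)` this gives
`ν (⋃ n, B n) ≤ ⨆ n, ν (B n)`; the reverse inequality is monotonicity of `ν`, which comes
from the closure of each `𝓙_t` under measurable subsets.
-/

section

variable {E : Type*}

theorem IsSigmaIdeal.empty_mem [MeasurableSpace E] {I : Set (Set E)} (hI : IsSigmaIdeal I) :
    ∅ ∈ I := by
  obtain ⟨⟨A, hA⟩, -, -, hsub⟩ := hI
  exact hsub ∅ A hA (empty_subset A) MeasurableSet.empty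

noncomputable def idealLevel (J : ℝ≥0∞ → Set (Set E)) (B : Set E) : ℝ≥0∞ :=
  sInf {t : ℝ≥0∞ | t ∈ Ioo (0 : ℝ≥0∞) ⊤ ∧ B ∈ J t}

variable {J : ℝ≥0∞ → Set (Set E)} {A B : Set E}

theorem idealLevel_le_of_forall_mem {s : ℝ≥0∞} (h : ∀ t ∈ Ioo s ⊤, B ∈ J t) :
    idealLevel J B ≤ s := by
  refine le_of_forall_gt_imp_ge_of_dense fun t hst => ?_
  rcases eq_or_lt_of_le (le_top : t ≤ ⊤) with rfl | htop
  · exact le_top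
  exact sInf_le ⟨⟨zero_le.trans_lt hst, htop⟩, h t ⟨hst, htop⟩⟩

theorem mem_of_idealLevel_lt
    (hmono : ∀ s t : ℝ≥0∞, s ∈ Ioo (0 : ℝ≥0∞) ⊤ → t ∈ Ioo (0 : ℝ≥0∞) ⊤ → s ≤ t → J s ⊆ J t)
    {t : ℝ≥0∞} (ht : t ∈ Ioo (0 : ℝ≥0∞) ⊤) (hB : idealLevel J B < t) : B ∈ J t := by
  obtain ⟨u, ⟨hu, huB⟩, hut⟩ := sInf_lt_iff.mp hB
  exact hmono u t hu ht hut.le huB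

theorem idealLevel_empty [MeasurableSpace E] (hJ : ∀ t ∈ Ioo (0 : ℝ≥0∞) ⊤, IsSigmaIdeal (J t)) :
    idealLevel J (∅ : Set E) = 0 :=
  nonpos_iff_eq_zero.mp <| idealLevel_le_of_forall_mem fun t ht => (hJ t ht).empty_mem

theorem idealLevel_mono [MeasurableSpace E] (hJ : ∀ t ∈ Ioo (0 : ℝ≥0∞) ⊤, IsSigmaIdeal (J t))
    (hA : MeasurableSet A) (hAB : A ⊆ B) : idealLevel J A ≤ idealLevel J B :=
  sInf_le_sInf fun t ⟨ht, hB⟩ => ⟨ht, (hJ t ht).2.2.2 A B hB hAB hA⟩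

theorem idealLevel_iUnion_le [MeasurableSpace E] (hJ : ∀ t ∈ Ioo (0 : ℝ≥0∞) ⊤, IsSigmaIdeal (J t))
    (hmono : ∀ s t : ℝ≥0∞, s ∈ Ioo (0 : ℝ≥0∞) ⊤ → t ∈ Ioo (0 : ℝ≥0∞) ⊤ → s ≤ t → J s ⊆ J t)
    (B : ℕ → Set E) : idealLevel J (⋃ n, B n) ≤ ⨆ n, idealLevel J (B n) := by
  refine idealLevel_le_of_forall_mem fun t ht => ?_
  have ht' : t ∈ Ioo (0 : ℝ≥0∞) ⊤ := ⟨zero_le.trans_lt ht.1, ht.2⟩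
  exact (hJ t ht').2.2.1 B fun n =>
    mem_of_idealLevel_lt hmono ht' ((le_iSup (fun n => idealLevel J (B n)) n).trans_lt ht.1)

end

/-- The infimum-over-ideals construction of Nguyen et al.: given a nondecreasing
family `(𝓙_t)_{t ∈ (0,∞)}` of σ-ideals, `B ↦ ⨅ {t ∈ (0,∞) : B ∈ 𝓙_t}` is a
σ-maxitive measure. -/
theorem sigmaMaxitive_of_sigmaIdeal_family {E : Type*} [MeasurableSpace E]
    (J : ℝ≥0∞ → Set (Set E))
    (hJ : ∀ t ∈ Ioo (0 : ℝ≥0∞) ⊤, IsSigmaIdeal (J t))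
    (hmono : ∀ s t : ℝ≥0∞, s ∈ Ioo (0 : ℝ≥0∞) ⊤ → t ∈ Ioo (0 : ℝ≥0∞) ⊤ →
      s ≤ t → J s ⊆ J t) :
    SigmaMaxitive
      (fun B : Set E => sInf {t : ℝ≥0∞ | t ∈ Ioo (0 : ℝ≥0∞) ⊤ ∧ B ∈ J t}) := by
  refine ⟨idealLevel_empty hJ, fun B hB => le_antisymm (idealLevel_iUnion_le hJ hmono B) ?_⟩
  exact iSup_le fun n => idealLevel_mono hJ (hB n) (subset_iUnion B n)
end

section
/- Let ⊙ be a non-degenerate pseudo-multiplication on [0,∞] and let τ be a σ-maxitive measure on a measurable space (E, 𝔅) having the Radon–Nikodym property with respect to the idempotent ⊙-integral. Then τ is localizable: for every σ-ideal 𝓘 of 𝔅 there exists a measurable set L such that (i) τ(S \ L) = 0 for all S ∈ 𝓘, and (ii) for every measurable B with τ(S \ B) = 0 for all S ∈ 𝓘, one has τ(L \ B) = 0. -/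
open scoped ENNReal
open Set

/-- `ν ≪⊙ τ`: `ν(B) ≤ ∞ ⊙ τ(B)` whenever `τ(B)` is `⊙`-finite. -/
def OAbsCont {E : Type*} [MeasurableSpace E] (P : PseudoMul)
    (ν τ : Set E → ℝ≥0∞) : Prop :=
  ∀ B : Set E, MeasurableSet B → P.OFinite (τ B) → ν B ≤ P.op ⊤ (τ B)

/-- `τ` is σ-`⊙`-finite. -/
def SigmaOFinite {E : Type*} [MeasurableSpace E] (P : PseudoMul)
    (τ : Set E → ℝ≥0∞) : Prop :=
  ∃ B : ℕ → Set E, (∀ n, MeasurableSet (B n)) ∧ (⋃ n, B n) = univ ∧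
    ∀ n, P.OFinite (τ (B n))

/-- `τ` has the Radon–Nikodym property w.r.t. the idempotent `⊙`-integral. -/
def HasRNP {E : Type*} [MeasurableSpace E] (P : PseudoMul)
    (τ : Set E → ℝ≥0∞) : Prop :=
  ∀ ν : Set E → ℝ≥0∞, SigmaMaxitive ν → OAbsCont P ν τ →
    ∃ c : E → ℝ≥0∞, Measurable c ∧
      ∀ B : Set E, MeasurableSet B → ν B = idemInt P τ c B

/-!
Apply the Radon–Nikodym property to `ν B := ⨆_{S ∈ 𝓘} τ(B ∩ S)`, which is σ-maxitive and
dominated by `τ`, hence `⊙`-absolutely continuous with respect to `τ`, and let `c` be a density.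
Since `⊙` has no zero divisors, `ν(B) = ∫_B c ⊙ dτ` vanishes iff `τ(B ∩ {c > 0}) = 0`. Hence
`L := {c > 0}` satisfies `τ(S \ L) ≤ ν(S \ L) = 0` for `S ∈ 𝓘`, and if `B` `τ`-essentially
contains every member of `𝓘`, then `ν(L \ B) = 0`, i.e. `τ(L \ B) = 0`.
-/

section

variable {E : Type*}

theorem setOf_pos_eq_iUnion (c : E → ℝ≥0∞) :
    {x | 0 < c x} = ⋃ n : ℕ, {x | ((n : ℝ≥0∞) + 1)⁻¹ < c x} := by
  refine subset_antisymm (fun x hx => ?_) (iUnion_subset fun n x hx => ?_)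
  · obtain ⟨n, hn⟩ := ENNReal.exists_inv_nat_lt (ne_of_gt hx)
    exact mem_iUnion.2 ⟨n, (ENNReal.inv_le_inv.2 le_self_add).trans_lt hn⟩
  · exact zero_le.trans_lt (show _ < c x from hx)

noncomputable def traceSup (τ : Set E → ℝ≥0∞) (I : Set (Set E)) (B : Set E) : ℝ≥0∞ :=
  ⨆ S ∈ I, τ (B ∩ S)

theorem le_traceSup (τ : Set E → ℝ≥0∞) {I : Set (Set E)} (B : Set E) {S : Set E}
    (hS : S ∈ I) : τ (B ∩ S) ≤ traceSup τ I B :=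
  le_iSup₂ (f := fun T (_ : T ∈ I) => τ (B ∩ T)) S hS

variable [MeasurableSpace E]

theorem SigmaMaxitive.mono_s16 {τ : Set E → ℝ≥0∞} (hτ : SigmaMaxitive τ) {A B : Set E}
    (hA : MeasurableSet A) (hB : MeasurableSet B) (hAB : A ⊆ B) : τ A ≤ τ B := by
  have hU : (⋃ n : ℕ, if n = 0 then A else B) = B := by
    refine subset_antisymm (iUnion_subset fun n => ?_) fun x hx => mem_iUnion.2 ⟨1, by simpa⟩
    cases n <;> simp [hAB]
  have h := hτ.2 (fun n => if n = 0 then A else B) fun n => by cases n <;> simpa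
  rw [hU] at h
  exact h ▸ le_iSup_of_le 0 (by simp)

theorem SigmaMaxitive.traceSup {τ : Set E → ℝ≥0∞} (hτ : SigmaMaxitive τ) {I : Set (Set E)}
    (hI : ∀ S ∈ I, MeasurableSet S) : SigmaMaxitive (traceSup τ I) := by
  refine ⟨by simp [_root_.traceSup, hτ.1], fun B hB => ?_⟩
  calc _root_.traceSup τ I (⋃ n, B n) = ⨆ S ∈ I, ⨆ n, τ (B n ∩ S) := by
        refine iSup_congr fun S => iSup_congr fun hS => ?_
        rw [iUnion_inter]
        exact hτ.2 _ fun n => (hB n).inter (hI S hS)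
    _ = ⨆ n, _root_.traceSup τ I (B n) := by
        simp only [_root_.traceSup, iSup_comm (ι' := ℕ)]

theorem traceSup_le {τ : Set E → ℝ≥0∞} (hτ : SigmaMaxitive τ) {I : Set (Set E)}
    (hI : ∀ S ∈ I, MeasurableSet S) {B : Set E} (hB : MeasurableSet B) :
    traceSup τ I B ≤ τ B :=
  iSup₂_le fun S hS => hτ.mono_s16 (hB.inter (hI S hS)) hB inter_subset_left

theorem traceSup_sdiff_eq_zero {τ : Set E → ℝ≥0∞} (hτ : SigmaMaxitive τ) {I : Set (Set E)}
    (hI : ∀ S ∈ I, MeasurableSet S) {A B : Set E} (hA : MeasurableSet A) (hB : MeasurableSet B)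
    (hBI : ∀ S ∈ I, τ (S \ B) = 0) : traceSup τ I (A \ B) = 0 :=
  ENNReal.iSup_eq_zero.2 fun S => ENNReal.iSup_eq_zero.2 fun hS => nonpos_iff_eq_zero.1 <|
    hBI S hS ▸ hτ.mono_s16 ((hA.diff hB).inter (hI S hS)) ((hI S hS).diff hB)
      fun _ hx => ⟨hx.2, hx.1.2⟩

theorem oAbsCont_of_le (P : PseudoMul) {ν τ : Set E → ℝ≥0∞}
    (h : ∀ B, MeasurableSet B → ν B ≤ τ B) : OAbsCont P ν τ := fun B hB _ =>
  calc ν B ≤ τ B := h B hB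
    _ = P.op P.one (τ B) := (P.one_op _).symm
    _ ≤ P.op ⊤ (τ B) := P.mono_left _ le_top

theorem idemInt_eq_zero_iff (P : PseudoMul) {τ : Set E → ℝ≥0∞} (hτ : SigmaMaxitive τ)
    {c : E → ℝ≥0∞} (hc : Measurable c) {B : Set E} (hB : MeasurableSet B) :
    idemInt P τ c B = 0 ↔ τ (B ∩ {x | 0 < c x}) = 0 := by
  have hmeas : ∀ t, MeasurableSet (B ∩ {x | t < c x}) := fun t =>
    hB.inter (measurableSet_lt measurable_const hc)
  simp only [idemInt, ENNReal.iSup_eq_zero]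
  constructor
  · intro h
    rw [setOf_pos_eq_iUnion, inter_iUnion, hτ.2 _ fun n => hmeas _, ENNReal.iSup_eq_zero]
    intro n
    refine (P.no_zero_divisors _ _ (h _ ?_)).resolve_left ?_
    · simp [ENNReal.inv_lt_top]
    · simp
  · intro h t _
    have hτt : τ (B ∩ {x | t < c x}) ≤ τ (B ∩ {x | 0 < c x}) :=
      hτ.mono_s16 (hmeas t) (hmeas 0)
        (inter_subset_inter_right _ fun x (hx : t < c x) => zero_le.trans_lt hx)
    rw [h, nonpos_iff_eq_zero] at hτt
    rw [hτt, P.op_zero]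

end

theorem localizable_of_rnp_general {E : Type*} [MeasurableSpace E]
    (P : PseudoMul)
    (τ : Set E → ℝ≥0∞) (hτ : SigmaMaxitive τ) (hRNP : HasRNP P τ) :
    ∀ I : Set (Set E), IsSigmaIdeal I →
      ∃ L : Set E, MeasurableSet L ∧ (∀ S ∈ I, τ (S \ L) = 0) ∧
        ∀ B : Set E, MeasurableSet B → (∀ S ∈ I, τ (S \ B) = 0) →
          τ (L \ B) = 0 := by
  intro I ⟨_, hImeas, _, hIsub⟩
  obtain ⟨c, hc, hcν⟩ := hRNP (traceSup τ I) (hτ.traceSup hImeas)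
    (oAbsCont_of_le P fun B hB => traceSup_le hτ hImeas hB)
  set L := {x | 0 < c x}
  have hL : MeasurableSet L := measurableSet_lt measurable_const hc
  have traceSup_eq_zero_iff {B : Set E} (hB : MeasurableSet B) :
      traceSup τ I B = 0 ↔ τ (B ∩ L) = 0 :=
    hcν B hB ▸ idemInt_eq_zero_iff P hτ hc hB
  refine ⟨L, hL, fun S hS => ?_, fun B hB hBI => ?_⟩
  · have hSL : MeasurableSet (S \ L) := (hImeas S hS).diff hL
    have hν : traceSup τ I (S \ L) = 0 := (traceSup_eq_zero_iff hSL).2 (by simp [hτ.1])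
    have hτν := le_traceSup τ (S \ L) (hIsub _ S hS sdiff_subset hSL)
    rwa [inter_self, hν, nonpos_iff_eq_zero] at hτν
  · rw [← inter_eq_left.2 (sdiff_subset : L \ B ⊆ L)]
    exact (traceSup_eq_zero_iff (hL.diff hB)).1 (traceSup_sdiff_eq_zero hτ hImeas hL hB hBI)

/-- A σ-maxitive measure with the Radon–Nikodym property is localizable. -/
theorem localizable_of_rnp {E : Type*} [MeasurableSpace E]
    (P : PseudoMul) (hP : P.Nondegenerate)
    (τ : Set E → ℝ≥0∞) (hτ : SigmaMaxitive τ) (hRNP : HasRNP P τ) :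
    ∀ I : Set (Set E), IsSigmaIdeal I →
      ∃ L : Set E, MeasurableSet L ∧ (∀ S ∈ I, τ (S \ L) = 0) ∧
        ∀ B : Set E, MeasurableSet B → (∀ S ∈ I, τ (S \ B) = 0) →
          τ (L \ B) = 0 :=
  localizable_of_rnp_general P τ hτ hRNP
end

section
/- Let E be a nonempty set equipped with the power-set σ-algebra. Define δ_#(B) = 1 for nonempty B and δ_#(∅) = 0, and τ(B) = ∞ for nonempty B and τ(∅) = 0; both are σ-maxitive measures and δ_# is absolutely continuous with respect to τ (δ_#(B) ≤ ∞ * τ(B) whenever τ(B) < ∞). Nevertheless, there exists no map c : E → [0,∞] such that δ_#(B) = ⨆_{t∈(0,∞)} t * τ(B ∩ {c > t}) for all B ⊆ E; i.e., δ_# has no density with respect to τ for the Shilkret integral. -/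
open scoped ENNReal
open Set Classical

/-- `δ_#`: value `1` on nonempty sets, `0` on the empty set. -/
noncomputable def deltaSharp (E : Type*) : Set E → ℝ≥0∞ :=
  fun B => if B = ∅ then 0 else 1

/-- `τ`: value `∞` on nonempty sets, `0` on the empty set. -/
noncomputable def infDeltaSharp (E : Type*) : Set E → ℝ≥0∞ :=
  fun B => if B = ∅ then 0 else ⊤

noncomputable def shilkretIntegral {E : Type*} (ν : Set E → ℝ≥0∞) (B : Set E) (f : E → ℝ≥0∞) :
    ℝ≥0∞ :=
  ⨆ t ∈ Ioo (0 : ℝ≥0∞) ⊤, t * ν (B ∩ {x | t < f x})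

theorem sigmaMaxitive_ite_empty {E : Type*} [MeasurableSpace E] (v : ℝ≥0∞) :
    SigmaMaxitive (fun B : Set E => if B = ∅ then 0 else v) := by
  refine ⟨if_pos rfl, fun B _ => ?_⟩
  by_cases hB : ∀ n, B n = ∅
  · simp [hB]
  · obtain ⟨n, hn⟩ := not_forall.mp hB
    have hU : (⋃ m, B m) ≠ ∅ := fun hU => hn (iUnion_eq_empty.mp hU n)
    refine (if_neg hU).trans (le_antisymm ?_ (iSup_le fun m => ?_))
    · exact (if_neg hn).symm.le.trans (le_iSup (fun m => if B m = ∅ then 0 else v) n)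
    · dsimp only; split_ifs <;> simp

theorem infDeltaSharp_lt_top_iff {E : Type*} {B : Set E} : infDeltaSharp E B < ⊤ ↔ B = ∅ := by
  by_cases hB : B = ∅ <;> simp [infDeltaSharp, hB]

/-- `τ` only takes the values `0` and `∞`, and `t * ∞ = ∞` for `t > 0`, so every term of the
supremum is `0` or `∞`; in particular `δ_#({x}) = 1` is not such an integral. -/
theorem shilkretIntegral_infDeltaSharp_eq_zero_or_top {E : Type*} (B : Set E) (f : E → ℝ≥0∞) :
    shilkretIntegral (infDeltaSharp E) B f = 0 ∨ shilkretIntegral (infDeltaSharp E) B f = ⊤ := by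
  by_cases hlevel : ∀ t ∈ Ioo (0 : ℝ≥0∞) ⊤, B ∩ {x | t < f x} = ∅
  · left
    simp only [shilkretIntegral, ENNReal.iSup_eq_zero]
    intro t ht
    simp [infDeltaSharp, hlevel t ht]
  · right
    obtain ⟨t, ht, hne⟩ := not_forall₂.mp hlevel
    refine top_le_iff.mp (le_trans ?_ (le_biSup (fun t => t * infDeltaSharp E _) ht))
    simp [infDeltaSharp, hne, ENNReal.mul_top ht.1.ne']

/-- On a nonempty set with the power-set σ-algebra, `δ_#` and `∞·δ_#` are
σ-maxitive, `δ_#` is absolutely continuous w.r.t. `∞·δ_#`, yet `δ_#` has no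
density w.r.t. `∞·δ_#` for the Shilkret integral. -/
theorem deltaSharp_no_density (E : Type*) [Nonempty E] :
    @SigmaMaxitive E ⊤ (deltaSharp E) ∧
    @SigmaMaxitive E ⊤ (infDeltaSharp E) ∧
    (∀ B : Set E, infDeltaSharp E B < ⊤ →
      deltaSharp E B ≤ ⊤ * infDeltaSharp E B) ∧
    ¬ ∃ c : E → ℝ≥0∞, ∀ B : Set E,
      deltaSharp E B =
        ⨆ t ∈ Ioo (0 : ℝ≥0∞) ⊤, t * infDeltaSharp E (B ∩ {x | t < c x}) := by
  refine ⟨@sigmaMaxitive_ite_empty E ⊤ 1, @sigmaMaxitive_ite_empty E ⊤ ⊤, fun B hB => ?_, ?_⟩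
  · simp [infDeltaSharp_lt_top_iff.mp hB, deltaSharp]
  · rintro ⟨c, hc⟩
    obtain ⟨x⟩ := ‹Nonempty E›
    have hvalues := shilkretIntegral_infDeltaSharp_eq_zero_or_top {x} c
    rw [shilkretIntegral, ← hc {x}] at hvalues
    simp [deltaSharp] at hvalues
end
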